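/- Consider the 2-component equation: 𝔽¹ = 2(u²₀·(u¹₀)² + α₀·u¹₀ − u¹₁), 𝔽² = 2(u²₋₁ − u¹₀·(u²₀)² − α₀·u²₀). Then the matrices M̆ = [[λ + α₀ + u¹₀·u²₀, u¹₀],[u²₀, 1]] and Ŭ = [[−λ, −2u¹₀],[−2u²₋₁, λ]] form an MLR for this equation: D_t(M̆) = S(Ŭ)·M̆ − M̆·Ŭ. -/
import Mathlib


open MvPolynomial

/-- Variables: `none` is `λ`; `some (none, ℓ)` is `α_ℓ`; `some (some j, ℓ)` is `u^j_ℓ`. -/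
abbrev VarA := Option (Option (Fin 2) × ℤ)

/-- Polynomial ring over `K` in `λ`, `α_ℓ`, `u¹_ℓ`, `u²_ℓ`. -/
abbrev PolyA (K : Type) [Field K] := MvPolynomial VarA K

/-- Field of rational functions over `K` in `λ`, `α_ℓ`, `u¹_ℓ`, `u²_ℓ`. -/
abbrev FA (K : Type) [Field K] := FractionRing (PolyA K)

/-- The spectral parameter `λ`. -/
noncomputable def lam (K : Type) [Field K] : FA K :=
  algebraMap (PolyA K) (FA K) (X none)

/-- The variable `α_ℓ` (playing the role of `α(n+ℓ)`). -/
noncomputable def al (K : Type) [Field K] (ℓ : ℤ) : FA K :=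
  algebraMap (PolyA K) (FA K) (X (some (none, ℓ)))

/-- The variable `u¹_ℓ`. -/
noncomputable def U1 (K : Type) [Field K] (ℓ : ℤ) : FA K :=
  algebraMap (PolyA K) (FA K) (X (some (some 0, ℓ)))

/-- The variable `u²_ℓ`. -/
noncomputable def U2 (K : Type) [Field K] (ℓ : ℤ) : FA K :=
  algebraMap (PolyA K) (FA K) (X (some (some 1, ℓ)))

/-- Right-hand side `𝔽¹ = 2(u²₀·(u¹₀)² + α₀·u¹₀ − u¹₁)` of the equation. -/
noncomputable def Feq1 (K : Type) [Field K] : FA K :=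
  2 * (U2 K 0 * (U1 K 0) ^ 2 + al K 0 * U1 K 0 - U1 K 1)

/-- Right-hand side `𝔽² = 2(u²₋₁ − u¹₀·(u²₀)² − α₀·u²₀)` of the equation. -/
noncomputable def Feq2 (K : Type) [Field K] : FA K :=
  2 * (U2 K (-1) - U1 K 0 * (U2 K 0) ^ 2 - al K 0 * U2 K 0)

set_option maxHeartbeats 2000000 in
/-- STATEMENT 11.
`F` is the field of rational functions over a char-0 field `K` in `λ, α_ℓ, u¹_ℓ, u²_ℓ`;
`S` is the field automorphism over `K` fixing `λ` with `S(α_ℓ) = α_{ℓ+1}`,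
`S(u^j_ℓ) = u^j_{ℓ+1}`, and `D_t` is the total derivative of the equation
`∂_t u^j = 𝔽^j` with `𝔽¹ = 2(u²₀·(u¹₀)² + α₀·u¹₀ − u¹₁)`,
`𝔽² = 2(u²₋₁ − u¹₀·(u²₀)² − α₀·u²₀)` (the unique derivation with `D_t(λ) = 0`,
`D_t(α_ℓ) = 0`, `D_t(u^j_ℓ) = S^ℓ(𝔽^j)`); both are quantified by these characterizing
properties.  Claim: the matrices `M̆ = [[λ + α₀ + u¹₀u²₀, u¹₀],[u²₀, 1]]`,
`Ŭ = [[−λ, −2u¹₀],[−2u²₋₁, λ]]` form an MLR: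
`det M̆ ≠ 0` and `D_t(M̆) = S(Ŭ)·M̆ − M̆·Ŭ`. -/
theorem stmt_12 (K : Type) [Field K] [CharZero K]
    (S : FA K ≃+* FA K)
    (hSK : ∀ c : K, S (algebraMap K (FA K) c) = algebraMap K (FA K) c)
    (hSlam : S (lam K) = lam K)
    (hSal : ∀ ℓ : ℤ, S (al K ℓ) = al K (ℓ + 1))
    (hSu1 : ∀ ℓ : ℤ, S (U1 K ℓ) = U1 K (ℓ + 1))
    (hSu2 : ∀ ℓ : ℤ, S (U2 K ℓ) = U2 K (ℓ + 1))
    (Dt : FA K → FA K)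
    (hDadd : ∀ x y, Dt (x + y) = Dt x + Dt y)
    (hDmul : ∀ x y, Dt (x * y) = x * Dt y + Dt x * y)
    (hDK : ∀ c : K, Dt (algebraMap K (FA K) c) = 0)
    (hDlam : Dt (lam K) = 0)
    (hDal : ∀ ℓ : ℤ, Dt (al K ℓ) = 0)
    (hDu1 : ∀ ℓ : ℤ, Dt (U1 K ℓ) = (S ^ ℓ) (Feq1 K))
    (hDu2 : ∀ ℓ : ℤ, Dt (U2 K ℓ) = (S ^ ℓ) (Feq2 K)) :
    (!![lam K + al K 0 + U1 K 0 * U2 K 0, U1 K 0; U2 K 0, 1] :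
        Matrix (Fin 2) (Fin 2) (FA K)).det ≠ 0 ∧
    (!![lam K + al K 0 + U1 K 0 * U2 K 0, U1 K 0; U2 K 0, 1] :
        Matrix (Fin 2) (Fin 2) (FA K)).map Dt =
      (!![-(lam K), -(2 * U1 K 0); -(2 * U2 K (-1)), lam K] :
          Matrix (Fin 2) (Fin 2) (FA K)).map ⇑S *
        !![lam K + al K 0 + U1 K 0 * U2 K 0, U1 K 0; U2 K 0, 1] -
      !![lam K + al K 0 + U1 K 0 * U2 K 0, U1 K 0; U2 K 0, 1] *
        !![-(lam K), -(2 * U1 K 0); -(2 * U2 K (-1)), lam K] := by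
  have hD1 : Dt (1 : FA K) = 0 := by
    have h := hDK 1; rwa [map_one] at h
  have hS0 : ∀ x : FA K, (S ^ (0:ℤ)) x = x := by
    intro x; rw [zpow_zero]; rfl
  have hDu10 : Dt (U1 K 0) = Feq1 K := by rw [hDu1 0, hS0]
  have hDu20 : Dt (U2 K 0) = Feq2 K := by rw [hDu2 0, hS0]
  have hS2 : S (2 : FA K) = 2 := by
    have := map_ofNat S 2; simpa using this
  constructor
  · rw [Matrix.det_fin_two_of]
    have : (lam K + al K 0 + U1 K 0 * U2 K 0) * 1 - U1 K 0 * U2 K 0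
        = lam K + al K 0 := by ring
    rw [this]
    intro h
    have h' : algebraMap (PolyA K) (FA K) (X none + X (some (none, 0))) = 0 := by
      rw [RingHom.map_add]; exact h
    have h2 : (X none + X (some (none, 0)) : PolyA K) = 0 :=
      IsFractionRing.injective (PolyA K) (FA K) (h'.trans (RingHom.map_zero _).symm)
    have h3 := congrArg (MvPolynomial.coeff (Finsupp.single none 1)) h2
    simp [MvPolynomial.coeff_X', Finsupp.single_eq_single_iff] at h3
  · have hSU10 : S (U1 K 0) = U1 K 1 := by rw [hSu1 0]; norm_num
    have hSU2m1 : S (U2 K (-1)) = U2 K 0 := by rw [hSu2 (-1)]; norm_num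
    ext i j
    fin_cases i <;> fin_cases j <;>
      simp only [Matrix.map_apply, Matrix.sub_apply, Matrix.mul_apply,
        Fin.sum_univ_two, Fin.mk_zero, Fin.mk_one, Matrix.of_apply, Matrix.cons_val', Matrix.cons_val_zero,
        Matrix.cons_val_one, Matrix.head_cons, Matrix.head_fin_const,
        Matrix.empty_val', Matrix.cons_val_fin_one] <;>
      simp only [hDadd, hDmul, hDlam, hDal, hDu10, hDu20, hD1, map_neg, map_mul,
        hSlam, hS2, hSU10, hSU2m1, Feq1, Feq2] <;>
      ring
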